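/- arXiv:2402.00829 — 9 statements merged into one kernel-verified Lean document; each statement's English description precedes it below -/
import Mathlib

section
/- A point d=(x,y) with y ≠ 0 is reachable by the drone (leaving the truck at (s,0) and returning to the still-moving truck while flying total distance at most R) if and only if |d−(s,0)| + |d−(s+R/v, 0)| ≤ R, i.e., d lies on or inside the ellipse with foci (s,0) and (s+R/v,0) and major axis length R. -/
/-- Euclidean distance between two points of the plane (as pairs of reals). -/
noncomputable def dist2 (p q : ℝ × ℝ) : ℝ :=
  Real.sqrt ((p.1 - q.1) ^ 2 + (p.2 - q.2) ^ 2)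

lemma dist2_aux (x y r t : ℝ) :
    Real.sqrt ((x - t)^2 + y^2) ≤ Real.sqrt ((x - r)^2 + y^2) + |r - t| := by
  have h1 : |x - r| ≤ Real.sqrt ((x - r)^2 + y^2) := by
    rw [← Real.sqrt_sq_eq_abs]
    apply Real.sqrt_le_sqrt; nlinarith [sq_nonneg y]
  have hS : 0 ≤ Real.sqrt ((x - r)^2 + y^2) := Real.sqrt_nonneg _
  have hS2 : Real.sqrt ((x - r)^2 + y^2) ^ 2 = (x - r)^2 + y^2 :=
    Real.sq_sqrt (by positivity)
  rw [show Real.sqrt ((x - r)^2 + y^2) + |r - t| =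
      Real.sqrt ((Real.sqrt ((x - r)^2 + y^2) + |r - t|)^2) from
      (Real.sqrt_sq (by positivity)).symm]
  apply Real.sqrt_le_sqrt
  have h2 : (x - r) * (r - t) ≤ |x - r| * |r - t| := by
    rw [← abs_mul]; exact le_abs_self _
  nlinarith [abs_nonneg (r - t), sq_abs (r - t),
    mul_le_mul_of_nonneg_right h1 (abs_nonneg (r - t))]

/-- A point `d = (x,y)` with `y ≠ 0` is reachable by the drone (leaving the truck at
`(s,0)` and returning to the still-moving truck, flying total distance at most `R`)
iff the sum of its distances to `(s,0)` and `(s + R/v, 0)` is at most `R`,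
i.e. iff it lies on or inside the ellipse with those foci and major axis length `R`. -/
theorem reachable_iff_in_ellipse (v R s : ℝ) (hv : 1 < v) (hR : 0 < R)
    (d : ℝ × ℝ) (hy : d.2 ≠ 0) :
    (∃ r : ℝ, s ≤ r ∧
        dist2 d (s, 0) + dist2 ((r : ℝ), 0) d = v * (r - s) ∧ v * (r - s) ≤ R) ↔
      dist2 d (s, 0) + dist2 d (s + R / v, 0) ≤ R := by
  obtain ⟨x, y⟩ := d
  simp only [ne_eq] at hy
  have hv0 : (0:ℝ) < v := lt_trans one_pos hv
  have hRv : v * (R / v) = R := mul_div_cancel₀ R (ne_of_gt hv0)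
  have hg : ∀ r : ℝ, dist2 ((r:ℝ), 0) (x, y) = Real.sqrt ((x - r)^2 + y^2) := by
    intro r; unfold dist2; ring_nf
  have hd : ∀ t : ℝ, dist2 (x, y) (t, 0) = Real.sqrt ((x - t)^2 + y^2) := by
    intro t; unfold dist2; ring_nf
  have ha : 0 < Real.sqrt ((x - s)^2 + y^2) := by
    apply Real.sqrt_pos.mpr
    have hy2 : 0 < y^2 := by positivity
    nlinarith [sq_nonneg (x - s)]
  constructor
  · rintro ⟨r, hsr, heq, hle⟩
    rw [hd s, hg r] at heq
    rw [hd s, hd (s + R / v)]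
    have hr : r ≤ s + R / v := by
      have : r - s ≤ R / v := (le_div_iff₀ hv0).mpr (by linarith)
      linarith
    have htri := dist2_aux x y r (s + R / v)
    rw [abs_of_nonpos (by linarith)] at htri
    nlinarith [htri, heq, hle, hr, ha, Real.sqrt_nonneg ((x - r)^2 + y^2)]
  · intro hE
    rw [hd s, hd (s + R / v)] at hE
    set f : ℝ → ℝ := fun r =>
      Real.sqrt ((x - s)^2 + y^2) + Real.sqrt ((x - r)^2 + y^2) - v * (r - s) with hf
    have hcont : Continuous f := by
      apply Continuous.sub
      · exact continuous_const.add
          (((continuous_const.sub continuous_id).pow 2 |>.add continuous_const).sqrt)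
      · exact continuous_const.mul (continuous_id.sub continuous_const)
    have hfs : 0 < f s := by
      simp only [hf]
      have := Real.sqrt_nonneg ((x - s)^2 + y^2)
      nlinarith
    have hle2 : f (s + R / v) ≤ 0 := by
      simp only [hf]
      have : v * (s + R / v - s) = R := by rw [add_sub_cancel_left]; exact hRv
      linarith
    have hab : s ≤ s + R / v := by
      have := div_pos hR hv0; linarith
    obtain ⟨r, hrmem, hfr⟩ :=
      intermediate_value_Icc' hab hcont.continuousOn ⟨hle2, le_of_lt hfs⟩
    refine ⟨r, hrmem.1, ?_, ?_⟩
    · rw [hd s, hg r]; simp only [hf] at hfr; linarith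
    · have h1 : r - s ≤ R / v := by linarith [hrmem.2]
      calc v * (r - s) ≤ v * (R / v) := by nlinarith
        _ = R := hRv
end

section
/- For a delivery point d=(x,y) within the reachable band (|y| ≤ (R/(2v))√(v²−1)), setting x' = (R/2)·√(1 − y²v²/((R/2)²(v²−1))), the earliest feasible departure position is es(d) = x − R/(2v) − x' and the latest feasible departure position is ls(d) = x − R/(2v) + x'; i.e., there exists a feasible delivery trip to d starting at (s,0) if and only if es(d) ≤ s ≤ ls(d). -/
theorem exists_trip_iff_dist_add_dist_le {X : Type*} [MetricSpace X] {γ : ℝ → X}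
    (hγ : LipschitzWith 1 γ) {d : X} {s v R : ℝ} (hv : 1 ≤ v) (hd : d ≠ γ s) :
    (∃ r, s < r ∧ dist d (γ s) + dist (γ r) d = v * (r - s) ∧ v * (r - s) ≤ R) ↔
      dist d (γ s) + dist d (γ (s + R / v)) ≤ R := by
  have hv₀ : 0 < v := by linarith
  have hvR : v * (R / v) = R := mul_div_cancel₀ R hv₀.ne'
  constructor
  · rintro ⟨r, -, htrip, hrange⟩
    have hr : r - s ≤ R / v := (le_div_iff₀' hv₀).2 hrange
    have hlast : dist (γ r) (γ (s + R / v)) ≤ s + R / v - r := by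
      simpa [Real.dist_eq, abs_of_nonpos (by linarith : r - (s + R / v) ≤ 0)] using
        hγ.dist_le_mul r (s + R / v)
    have htri := dist_triangle d (γ r) (γ (s + R / v))
    rw [dist_comm d (γ r)] at htri
    nlinarith [mul_nonneg (sub_nonneg.2 hv) (sub_nonneg.2 hr)]
  · intro hfoci
    have hd₀ : 0 < dist d (γ s) := dist_pos.2 hd
    have hT : s ≤ s + R / v := by
      have : 0 < R := by linarith [dist_nonneg (x := d) (y := γ (s + R / v))]
      linarith [div_pos this hv₀]
    set slack : ℝ → ℝ := fun r => dist d (γ s) + dist (γ r) d - v * (r - s)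
    have hslack : Continuous slack := by
      have := hγ.continuous
      fun_prop
    have hzero : (0 : ℝ) ∈ Set.Icc (slack (s + R / v)) (slack s) := by
      constructor
      · simp only [slack, add_sub_cancel_left, hvR, dist_comm _ d]; linarith
      · simp only [slack, dist_comm (γ s) d, sub_self, mul_zero]; linarith
    obtain ⟨r, ⟨hsr, hrT⟩, hr⟩ := intermediate_value_Icc' hT hslack.continuousOn hzero
    have hrs : r ≠ s := by
      rintro rfl
      simp only [slack, dist_comm (γ r) d, sub_self, mul_zero] at hr
      linarith
    refine ⟨r, lt_of_le_of_ne hsr hrs.symm, by simp only [slack] at hr; linarith, ?_⟩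
    nlinarith

/- Both focal-radius bounds rest on the identity
`M² ((u + c)² + y²) - (M² + c u)² = u² (M² - c²) + M² y² - M² (M² - c²)`. -/
lemma mul_sqrt_le_of_inside_ellipse {M c u y : ℝ} (hc : c ^ 2 < M ^ 2)
    (h : u ^ 2 * (M ^ 2 - c ^ 2) + M ^ 2 * y ^ 2 ≤ M ^ 2 * (M ^ 2 - c ^ 2)) :
    M * √((u + c) ^ 2 + y ^ 2) ≤ M ^ 2 + c * u := by
  have hu : u ^ 2 ≤ M ^ 2 := by nlinarith [sq_nonneg y]
  have hcu : 0 ≤ M ^ 2 + c * u := by nlinarith [sq_nonneg (c * u), sq_nonneg (c * u + M ^ 2)]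
  refine abs_le_of_sq_le_sq' ?_ hcu |>.2
  rw [mul_pow, Real.sq_sqrt (by positivity)]
  nlinarith

lemma lt_mul_sqrt_of_outside_ellipse {M c u y : ℝ} (hM : 0 ≤ M)
    (h : M ^ 2 * (M ^ 2 - c ^ 2) < u ^ 2 * (M ^ 2 - c ^ 2) + M ^ 2 * y ^ 2) :
    M ^ 2 + c * u < M * √((u + c) ^ 2 + y ^ 2) := by
  refine lt_of_le_of_lt (le_abs_self _) (abs_lt_of_sq_lt_sq ?_ (mul_nonneg hM (Real.sqrt_nonneg _)))
  rw [mul_pow, Real.sq_sqrt (by positivity)]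
  nlinarith

theorem sqrt_add_sqrt_le_two_mul_iff {M c u y : ℝ} (hM : 0 < M) (hc : c ^ 2 < M ^ 2) :
    √((u + c) ^ 2 + y ^ 2) + √((u - c) ^ 2 + y ^ 2) ≤ 2 * M ↔
      u ^ 2 * (M ^ 2 - c ^ 2) + M ^ 2 * y ^ 2 ≤ M ^ 2 * (M ^ 2 - c ^ 2) := by
  have hneg : ∀ w : ℝ, (u - c) ^ 2 + w = (u + -c) ^ 2 + w := fun w => by ring
  have hc' : (-c) ^ 2 = c ^ 2 := neg_sq c
  constructor
  · intro hsum
    by_contra! hout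
    have h₁ := lt_mul_sqrt_of_outside_ellipse hM.le hout
    have h₂ := lt_mul_sqrt_of_outside_ellipse (c := -c) (u := u) (y := y) hM.le (by rwa [hc'])
    rw [← hneg] at h₂
    nlinarith
  · intro hin
    have h₁ := mul_sqrt_le_of_inside_ellipse hc hin
    have h₂ := mul_sqrt_le_of_inside_ellipse (M := M) (c := -c) (u := u) (y := y)
      (by rwa [hc']) (by rwa [hc'])
    rw [← hneg] at h₂
    have : M * (√((u + c) ^ 2 + y ^ 2) + √((u - c) ^ 2 + y ^ 2)) ≤ M * (2 * M) := by nlinarith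
    exact le_of_mul_le_mul_left this hM

lemma ellipse_ineq_iff_abs_le {M m2 u y : ℝ} (hM : 0 ≤ M) (hm : 0 < m2) (hy : y ^ 2 ≤ m2) :
    u ^ 2 * m2 + M ^ 2 * y ^ 2 ≤ M ^ 2 * m2 ↔ |u| ≤ M * √(1 - y ^ 2 / m2) := by
  have ht : 0 ≤ 1 - y ^ 2 / m2 := sub_nonneg.2 ((div_le_one hm).2 hy)
  rw [← sq_le_sq₀ (abs_nonneg u) (by positivity), sq_abs, mul_pow, Real.sq_sqrt ht,
    mul_sub, mul_one, mul_div_assoc', le_sub_iff_add_le]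
  conv_rhs => rw [← mul_le_mul_iff_of_pos_right hm, add_mul, div_mul_cancel₀ _ hm.ne']

lemma dist2_eq_dist_complex (x y x' y' : ℝ) :
    dist2 (x, y) (x', y') = dist (⟨x, y⟩ : ℂ) ⟨x', y'⟩ := by
  rw [dist2, Complex.dist_eq_re_im]

/-- For a delivery point `d = (x,y)` inside the reachable band
(`|y| ≤ m := (R/(2v))√(v²-1)`), with `x' = (R/2)·√(1 - y²v²/((R/2)²(v²-1)))`,
the feasible departure positions `s` for a delivery trip to `d` are exactly those with
`es(d) = x - R/(2v) - x' ≤ s ≤ x - R/(2v) + x' = ls(d)`. -/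
theorem feasible_start_interval (v R s x y : ℝ) (hv : 1 < v) (hR : 0 < R)
    (hy : y ≠ 0)
    (hband : |y| ≤ R / (2 * v) * Real.sqrt (v ^ 2 - 1)) :
    (∃ r : ℝ, s < r ∧
        dist2 (x, y) (s, 0) + dist2 ((r : ℝ), 0) (x, y) = v * (r - s) ∧
        v * (r - s) ≤ R) ↔
      (x - R / (2 * v) - (R / 2) * Real.sqrt (1 - y ^ 2 * v ^ 2 / ((R / 2) ^ 2 * (v ^ 2 - 1))) ≤ s ∧
        s ≤ x - R / (2 * v) + (R / 2) * Real.sqrt (1 - y ^ 2 * v ^ 2 / ((R / 2) ^ 2 * (v ^ 2 - 1)))) := by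
  have hv₁ : 0 < v ^ 2 - 1 := by nlinarith
  have hd : (⟨x, y⟩ : ℂ) ≠ (s : ℂ) := fun h => hy (congrArg Complex.im h)
  simp only [dist2_eq_dist_complex]
  refine (exists_trip_iff_dist_add_dist_le Complex.isometry_ofReal.lipschitz hv.le hd).trans ?_
  have hc : 0 < R / (2 * v) := by positivity
  set c := R / (2 * v)
  set M := R / 2
  have hRv : R / v = 2 * c := by simp only [c]; field_simp
  have hMc : M = v * c := by simp only [M, c]; field_simp
  have hm : M ^ 2 - c ^ 2 = (c * √(v ^ 2 - 1)) ^ 2 := by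
    rw [mul_pow, Real.sq_sqrt hv₁.le, hMc]; ring
  have hm₀ : 0 < M ^ 2 - c ^ 2 := by
    have := Real.sqrt_pos.2 hv₁
    rw [hm]; positivity
  have hym : y ^ 2 ≤ M ^ 2 - c ^ 2 := by
    rw [hm, ← sq_abs y]; exact pow_le_pow_left₀ (abs_nonneg y) hband 2
  have hq : y ^ 2 * v ^ 2 / (M ^ 2 * (v ^ 2 - 1)) = y ^ 2 / (M ^ 2 - c ^ 2) := by
    rw [hMc]; field_simp
  have hsum : dist (⟨x, y⟩ : ℂ) s + dist (⟨x, y⟩ : ℂ) ↑(s + R / v)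
      = √((x - c - s + c) ^ 2 + y ^ 2) + √((x - c - s - c) ^ 2 + y ^ 2) := by
    simp only [Complex.dist_eq_re_im, Complex.ofReal_re, Complex.ofReal_im, sub_zero, hRv]
    ring_nf
  rw [hsum, show R = 2 * M by ring, sqrt_add_sqrt_le_two_mul_iff (by positivity) (sub_pos.1 hm₀),
    ellipse_ineq_iff_abs_le (by positivity) hm₀ hym, hq, abs_le]
  constructor <;> rintro ⟨h₁, h₂⟩ <;> constructor <;> linarith
end

section
/- Suppose the drone leaves the truck at (s,0) (with es(d) ≤ s ≤ ls(d)), delivers to d=(x,y), and returns to the truck which moves at speed 1 along the x-axis. Then the return position r satisfies r = s + (s + av − x + √(b² − s(v²−1)(b + s + av − x)))/(v²−1), where a = √(y² + (s−x)²) and b = sv² + av − x. -/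
/-- If the drone leaves the truck at `(s,0)` with `es(d) ≤ s ≤ ls(d)`, delivers to
`d = (x,y)` (off the axis) and returns to the truck (moving right at speed 1) at
`(r,0)`, i.e. `√(y²+(s-x)²) + √((r-x)²+y²) = v(r-s)` with `r > s`, then
`r = s + (s + av - x + √(b² - s(v²-1)(b + s + av - x)))/(v²-1)` where
`a = √(y²+(s-x)²)` and `b = sv² + av - x`. -/
theorem return_position_formula (v R s x y r : ℝ) (hv : 1 < v) (hR : 0 < R)
    (hy : y ≠ 0)
    (hes : x - R / (2 * v) -
        (R / 2) * Real.sqrt (1 - y ^ 2 * v ^ 2 / ((R / 2) ^ 2 * (v ^ 2 - 1))) ≤ s)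
    (hls : s ≤ x - R / (2 * v) +
        (R / 2) * Real.sqrt (1 - y ^ 2 * v ^ 2 / ((R / 2) ^ 2 * (v ^ 2 - 1))))
    (hr : s < r)
    (hmeet : Real.sqrt (y ^ 2 + (s - x) ^ 2) + Real.sqrt ((r - x) ^ 2 + y ^ 2)
        = v * (r - s)) :
    r = s + (s + Real.sqrt (y ^ 2 + (s - x) ^ 2) * v - x +
          Real.sqrt ((s * v ^ 2 + Real.sqrt (y ^ 2 + (s - x) ^ 2) * v - x) ^ 2 -
            s * (v ^ 2 - 1) *
              ((s * v ^ 2 + Real.sqrt (y ^ 2 + (s - x) ^ 2) * v - x) + s +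
                Real.sqrt (y ^ 2 + (s - x) ^ 2) * v - x))) /
        (v ^ 2 - 1) := by
  set a := Real.sqrt (y ^ 2 + (s - x) ^ 2) with ha
  have ha0 : 0 ≤ a := Real.sqrt_nonneg _
  have ha2 : a ^ 2 = y ^ 2 + (s - x) ^ 2 := Real.sq_sqrt (by positivity)
  have hax : x - s ≤ a := by
    have h1 : |s - x| ≤ a := by
      rw [ha, ← Real.sqrt_sq_eq_abs]
      exact Real.sqrt_le_sqrt (by nlinarith [sq_nonneg y])
    have := neg_abs_le (s - x)
    linarith
  have hc : 0 ≤ s + a * v - x := by nlinarith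
  have hv1 : 0 < v ^ 2 - 1 := by nlinarith
  have hs2 : Real.sqrt ((r - x) ^ 2 + y ^ 2) = v * (r - s) - a := by linarith
  have hsq : (r - x) ^ 2 + y ^ 2 = (v * (r - s) - a) ^ 2 := by
    rw [← hs2, Real.sq_sqrt (by positivity)]
  have key : (r - s) * ((v ^ 2 - 1) * (r - s) - 2 * (s + a * v - x)) = 0 := by
    linear_combination -ha2 - hsq
  have hts : r - s ≠ 0 := by linarith
  have key2 : (v ^ 2 - 1) * (r - s) - 2 * (s + a * v - x) = 0 :=
    (mul_eq_zero.mp key).resolve_left hts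
  have hrval : r = s + 2 * (s + a * v - x) / (v ^ 2 - 1) := by
    field_simp
    linarith [key2]
  have hb : (s * v ^ 2 + a * v - x) ^ 2 -
      s * (v ^ 2 - 1) * ((s * v ^ 2 + a * v - x) + s + a * v - x)
      = (s + a * v - x) ^ 2 := by ring
  rw [hrval, hb, Real.sqrt_sq hc]
  ring
end

section
/- The exact round-trip time for a drone starting at (s,0), s ≥ 0, delivering to (0,y) with y > 0 and returning to the truck (moving right at speed 1) is Δs = 2(v√(s²+y²) + s)/(v²−1), and this satisfies Δs ≥ 2vy/(v²−1) ≥ 2y/v. -/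
/-- The exact round-trip time for a drone of speed `v > 1` starting at `(s,0)`,
`s ≥ 0`, delivering to `(0,y)` with `y > 0` and returning to the truck moving right
at speed 1 (so `Δs > 0` is the solution of `√(s²+y²) + √((s+Δs)²+y²) = v·Δs`) is
`Δs = 2(v√(s²+y²) + s)/(v²-1)`, and it satisfies `Δs ≥ 2vy/(v²-1) ≥ 2y/v`. -/
theorem roundtrip_time_exact (v s y Δs : ℝ) (hv : 1 < v) (hs : 0 ≤ s)
    (hy : 0 < y) (hΔ : 0 < Δs)
    (hmeet : Real.sqrt (s ^ 2 + y ^ 2) + Real.sqrt ((s + Δs) ^ 2 + y ^ 2)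
        = v * Δs) :
    Δs = 2 * (v * Real.sqrt (s ^ 2 + y ^ 2) + s) / (v ^ 2 - 1) ∧
      2 * v * y / (v ^ 2 - 1) ≤ Δs ∧ 2 * y / v ≤ 2 * v * y / (v ^ 2 - 1) := by
  set A := Real.sqrt (s ^ 2 + y ^ 2) with hA
  set B := Real.sqrt ((s + Δs) ^ 2 + y ^ 2) with hB
  have hA2 : A ^ 2 = s ^ 2 + y ^ 2 := Real.sq_sqrt (by positivity)
  have hB2 : B ^ 2 = (s + Δs) ^ 2 + y ^ 2 := Real.sq_sqrt (by positivity)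
  have hAy : y ≤ A := (Real.le_sqrt hy.le (by positivity)).mpr (by nlinarith)
  have hv1 : 0 < v ^ 2 - 1 := by nlinarith
  have key : Δs * (v ^ 2 - 1) = 2 * v * A + 2 * s := by
    have hBe : B = v * Δs - A := by linarith
    have : B ^ 2 = (v * Δs - A) ^ 2 := by rw [hBe]
    rw [hB2] at this
    nlinarith [this, hA2, hΔ]
  have h1 : Δs = 2 * (v * A + s) / (v ^ 2 - 1) := by
    field_simp
    linarith
  refine ⟨h1, ?_, ?_⟩
  · rw [div_le_iff₀ hv1]
    nlinarith
  · rw [div_le_div_iff₀ (by linarith) hv1]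
    nlinarith
end

section
/- Let E₁ and E₂ be ellipses with foci on the x-axis, with E₂'s foci (s,0) and (r,0), and E₁'s foci (s',0) and (r',0), where both have eccentricity 1/v (focal distance over major-axis length), with major axis lengths R₂ = v(r−s) and R₁ = v(r'−s') respectively. If s' < s < r ≤ r', then R₂ < R₁ and the closed elliptical disk bounded by E₂ is contained in the open elliptical disk bounded by E₁. -/
lemma sqrt_shift (x y d : ℝ) (hd : 0 ≤ d) :
    Real.sqrt ((x + d) ^ 2 + y ^ 2) ≤ Real.sqrt (x ^ 2 + y ^ 2) + d := by
  have hx : x ≤ Real.sqrt (x ^ 2 + y ^ 2) := by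
    refine le_trans (le_abs_self x) ?_
    rw [← Real.sqrt_sq_eq_abs]
    exact Real.sqrt_le_sqrt (by nlinarith)
  have h0 : 0 ≤ Real.sqrt (x ^ 2 + y ^ 2) := Real.sqrt_nonneg _
  have hsq : Real.sqrt (x ^ 2 + y ^ 2) ^ 2 = x ^ 2 + y ^ 2 :=
    Real.sq_sqrt (by positivity)
  rw [show Real.sqrt (x ^ 2 + y ^ 2) + d = Real.sqrt ((Real.sqrt (x ^ 2 + y ^ 2) + d) ^ 2) from
    (Real.sqrt_sq (by linarith)).symm]
  exact Real.sqrt_le_sqrt (by nlinarith)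

/-- Let `E₂` be the ellipse with foci `(s,0)`, `(r,0)` and sum of focal distances
`R₂ = v(r-s)`, and `E₁` the one with foci `(s',0)`, `(r',0)` and sum `R₁ = v(r'-s')`
(both of eccentricity `1/v`). If `s' < s < r ≤ r'` then `R₂ < R₁` and the closed
elliptical disk bounded by `E₂` is contained in the open elliptical disk bounded
by `E₁`. -/
theorem ellipse_containment (v s r s' r' : ℝ) (hv : 1 < v)
    (h1 : s' < s) (h2 : s < r) (h3 : r ≤ r') :
    v * (r - s) < v * (r' - s') ∧
      {p : ℝ × ℝ | dist2 p (s, 0) + dist2 p (r, 0) ≤ v * (r - s)} ⊆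
        {p : ℝ × ℝ | dist2 p (s', 0) + dist2 p (r', 0) < v * (r' - s')} := by
  constructor
  · nlinarith
  · intro p hp
    simp only [Set.mem_setOf_eq, dist2] at hp ⊢
    have hA : Real.sqrt ((p.1 - s') ^ 2 + (p.2 - 0) ^ 2) ≤
        Real.sqrt ((p.1 - s) ^ 2 + (p.2 - 0) ^ 2) + (s - s') := by
      have := sqrt_shift (p.1 - s) (p.2 - 0) (s - s') (by linarith)
      have he : (p.1 - s + (s - s')) ^ 2 = (p.1 - s') ^ 2 := by ring
      rwa [he] at this
    have hB : Real.sqrt ((p.1 - r') ^ 2 + (p.2 - 0) ^ 2) ≤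
        Real.sqrt ((p.1 - r) ^ 2 + (p.2 - 0) ^ 2) + (r' - r) := by
      have := sqrt_shift (-(p.1 - r)) (p.2 - 0) (r' - r) (by linarith)
      have he : (-(p.1 - r) + (r' - r)) ^ 2 = (p.1 - r') ^ 2 := by ring
      have he2 : (-(p.1 - r)) ^ 2 = (p.1 - r) ^ 2 := by ring
      rwa [he, he2] at this
    nlinarith
end

section
/- Let d and d' be delivery points off the x-axis. Suppose there is a feasible drone trajectory from (s,0) to d returning to the truck at (r,0), and a feasible trajectory from (s',0) to d' returning at (r',0), where feasibility means drone flight distance equals v times truck travel time. If s' < s < r ≤ r', then there is a feasible drone trajectory from (s',0) to d returning at some point (r'',0) with r'' < r. -/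
/-- A drone trajectory from `(a,0)` to point `p` returning at `(b,0)` is feasible iff
`|p-(a,0)| + |(b,0)-p| = v(b-a)` with `b > a` (drone flight distance equals `v` times
the truck's travel time, truck moving right at speed 1). -/
def FeasibleTraj (v a : ℝ) (p : ℝ × ℝ) (b : ℝ) : Prop :=
  a < b ∧ dist2 p (a, 0) + dist2 ((b : ℝ), 0) p = v * (b - a)

/-- If there are feasible trajectories from `(s,0)` to `d` returning at `(r,0)` and
from `(s',0)` to `d'` returning at `(r',0)`, with `s' < s < r ≤ r'`, then there is a
feasible trajectory from `(s',0)` to `d` returning at some `(r'',0)` with `r'' < r`. -/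
theorem valid_trajectory_shift (v s r s' r' : ℝ) (d d' : ℝ × ℝ) (hv : 1 < v)
    (hd : d.2 ≠ 0) (hd' : d'.2 ≠ 0)
    (h1 : FeasibleTraj v s d r) (h2 : FeasibleTraj v s' d' r')
    (h3 : s' < s) (h4 : s < r) (h5 : r ≤ r') :
    ∃ r'' : ℝ, r'' < r ∧ FeasibleTraj v s' d r'' := by
  obtain ⟨hsr, heq⟩ := h1
  -- abbreviations
  set A : ℝ := dist2 d (s, 0) with hA_def
  set B : ℝ := dist2 d (s', 0) with hB_def
  have hAnn : 0 ≤ A := Real.sqrt_nonneg _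
  have hBnn : 0 ≤ B := Real.sqrt_nonneg _
  -- d.1 - s ≤ A
  have hA : d.1 - s ≤ A := by
    have h1' : d.1 - s ≤ Real.sqrt ((d.1 - s) ^ 2) := by
      rw [Real.sqrt_sq_eq_abs]; exact le_abs_self _
    have h2' : Real.sqrt ((d.1 - s) ^ 2) ≤ Real.sqrt ((d.1 - s) ^ 2 + (d.2 - 0) ^ 2) :=
      Real.sqrt_le_sqrt (by nlinarith [sq_nonneg (d.2 - 0)])
    calc d.1 - s ≤ _ := h1'
      _ ≤ _ := h2'
      _ = A := rfl
  have hAsq : A ^ 2 = (d.1 - s) ^ 2 + (d.2 - 0) ^ 2 := by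
    rw [hA_def]; unfold dist2; exact Real.sq_sqrt (by positivity)
  -- triangle-type inequality B ≤ A + (s - s')
  have htr : B ≤ A + (s - s') := by
    have key : B ≤ Real.sqrt ((A + (s - s')) ^ 2) := by
      rw [hB_def]; unfold dist2
      apply Real.sqrt_le_sqrt
      simp only
      nlinarith [hA, h3, hAsq]
    rwa [Real.sqrt_sq (by linarith)] at key
  -- the function g
  set g : ℝ → ℝ := fun b => B + dist2 (b, 0) d - v * (b - s') with hg
  have hcont : Continuous g := by
    rw [hg]; unfold dist2
    simp only
    fun_prop
  have hgr : g r < 0 := by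
    have : g r = B + dist2 (r, 0) d - v * (r - s') := rfl
    have hv' : (s - s') < v * (s - s') := by nlinarith
    simp only [hg]
    have heq' : A + dist2 (r, 0) d = v * (r - s) := heq
    nlinarith [htr]
  have hgs' : 0 < g s' := by
    have hpos : 0 < dist2 (s', 0) d := by
      rw [show dist2 (s', 0) d = Real.sqrt ((s' - d.1) ^ 2 + (0 - d.2) ^ 2) from rfl]
      apply Real.sqrt_pos.mpr
      have hne : (0:ℝ) - d.2 ≠ 0 := by simpa using hd
      have hp : 0 < ((0:ℝ) - d.2) ^ 2 := lt_of_le_of_ne (sq_nonneg _) (Ne.symm (pow_ne_zero 2 hne))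
      nlinarith [sq_nonneg (s' - d.1)]
    simp only [hg]
    have : v * (s' - s') = 0 := by ring
    nlinarith
  have hiv := intermediate_value_Ioo' (le_of_lt (lt_trans h3 h4)) hcont.continuousOn
  obtain ⟨c, hc, hgc⟩ := hiv ⟨hgr, hgs'⟩
  refine ⟨c, hc.2, hc.1, ?_⟩
  simp only [hg] at hgc
  linarith [hgc]
end

section
/- Greedy is a 2-approximation: for any instance I=(v,R,D) of the en route truck-drone delivery problem, if S_g is the schedule produced by the greedy algorithm (which at each return point schedules the feasible delivery minimizing the drone's return time) and S_OPT is a maximum-length feasible schedule, then |S_OPT| ≤ 2|S_g|. -/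
/-- A single delivery trip: the drone leaves the truck at `(s,0)`, flies to `p` and
back to the moving truck at `(r,0)` (`r > s`), covering distance `v(r-s) ≤ R`. -/
def Trip (v R s : ℝ) (p : ℝ × ℝ) (r : ℝ) : Prop :=
  s < r ∧ dist2 p (s, 0) + dist2 ((r : ℝ), 0) p = v * (r - s) ∧ v * (r - s) ≤ R

/-- `Feasible v R D L t` : the list `L` of deliveries (delivery point, start, return)
is a feasible schedule for the remaining delivery points `D` with the truck/drone
currently at time (position) `t`: deliveries use distinct points of `D`, each trip
starts no earlier than the previous trip's return. -/
def Feasible (v R : ℝ) : Finset (ℝ × ℝ) → List ((ℝ × ℝ) × ℝ × ℝ) → ℝ → Prop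
  | _, [], _ => True
  | D, (p, s, r) :: L, t =>
      p ∈ D ∧ t ≤ s ∧ Trip v R s p r ∧ Feasible v R (D.erase p) L r

/-- `Greedy v R D L t` : `L` is the schedule produced by the greedy algorithm from
current time `t` with remaining delivery points `D`: each scheduled trip returns to
the truck no later than any trip to any remaining delivery point started at or after
the current time, and greedy stops only when no remaining point is deliverable. -/
def Greedy (v R : ℝ) : Finset (ℝ × ℝ) → List ((ℝ × ℝ) × ℝ × ℝ) → ℝ → Prop
  | D, [], t => ∀ q ∈ D, ∀ s' r' : ℝ, t ≤ s' → ¬ Trip v R s' q r'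
  | D, (p, s, r) :: L, t =>
      p ∈ D ∧ t ≤ s ∧ Trip v R s p r ∧
      (∀ q ∈ D, ∀ s' r' : ℝ, t ≤ s' → Trip v R s' q r' → r ≤ r') ∧
      Greedy v R (D.erase p) L r

/-- Monotonicity: a feasible schedule stays feasible for a larger point set and
an earlier start time. -/
lemma feasible_mono (v R : ℝ) :
    ∀ (L : List ((ℝ × ℝ) × ℝ × ℝ)) (D D' : Finset (ℝ × ℝ)) (t t' : ℝ),
      Feasible v R D L t → D ⊆ D' → t' ≤ t → Feasible v R D' L t' := by
  intro L
  induction L with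
  | nil => intro D D' t t' _ _ _; trivial
  | cons e L ih =>
      obtain ⟨p, s, r⟩ := e
      intro D D' t t' hF hsub ht
      obtain ⟨hmem, hts, htrip, htail⟩ := hF
      exact ⟨hsub hmem, le_trans ht hts, htrip,
        ih (D.erase p) (D'.erase p) r r htail (Finset.erase_subset_erase p hsub) le_rfl⟩

/-- Removing one point from the remaining set costs at most one delivery of a
feasible schedule. -/
lemma feasible_erase (v R : ℝ) (p : ℝ × ℝ) :
    ∀ (L : List ((ℝ × ℝ) × ℝ × ℝ)) (D : Finset (ℝ × ℝ)) (t : ℝ),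
      Feasible v R D L t →
      ∃ L', Feasible v R (D.erase p) L' t ∧ L.length ≤ L'.length + 1 := by
  intro L
  induction L with
  | nil =>
      intro D t _
      exact ⟨[], trivial, by simp⟩
  | cons e L ih =>
      obtain ⟨q, s, r⟩ := e
      intro D t hF
      obtain ⟨hmem, hts, htrip, htail⟩ := hF
      by_cases hqp : q = p
      · subst hqp
        refine ⟨L, ?_, by simp⟩
        exact feasible_mono v R L (D.erase q) (D.erase q) r t htail (le_refl _)
          (le_trans hts htrip.1.le)
      · obtain ⟨L', hL', hlen⟩ := ih (D.erase q) r htail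
        refine ⟨(q, s, r) :: L', ⟨Finset.mem_erase.mpr ⟨hqp, hmem⟩, hts, htrip, ?_⟩, ?_⟩
        · rw [Finset.erase_right_comm]
          exact hL'
        · simpa using Nat.succ_le_succ hlen

lemma greedy_two_approx_aux (v R : ℝ) :
    ∀ (Lg : List ((ℝ × ℝ) × ℝ × ℝ)) (D : Finset (ℝ × ℝ)) (Lopt : List ((ℝ × ℝ) × ℝ × ℝ))
      (t : ℝ), Greedy v R D Lg t → Feasible v R D Lopt t →
      Lopt.length ≤ 2 * Lg.length := by
  intro Lg
  induction Lg with
  | nil =>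
      intro D Lopt t hg hopt
      cases Lopt with
      | nil => simp
      | cons e L =>
          obtain ⟨q, s1, r1⟩ := e
          obtain ⟨hmem, hts, htrip, _⟩ := hopt
          exact absurd htrip (hg q hmem s1 r1 hts)
  | cons e Lg ih =>
      obtain ⟨p, s, r⟩ := e
      intro D Lopt t hg hopt
      obtain ⟨hpD, hts, htrip, hmin, hgtail⟩ := hg
      cases Lopt with
      | nil => simp
      | cons f Lopt1 =>
          obtain ⟨q, s1, r1⟩ := f
          obtain ⟨hqD, hts1, htrip1, hotail⟩ := hopt
          have hr : r ≤ r1 := hmin q hqD s1 r1 hts1 htrip1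
          obtain ⟨L', hL', hlen⟩ := feasible_erase v R p Lopt1 (D.erase q) r1 hotail
          have hL'' : Feasible v R (D.erase p) L' r :=
            feasible_mono v R L' ((D.erase q).erase p) (D.erase p) r1 r hL'
              (by rw [Finset.erase_right_comm]; exact Finset.erase_subset _ _) hr
          have := ih (D.erase p) L' r hgtail hL''
          simp only [List.length_cons]
          omega

/-- Greedy is a 2-approximation: for any instance `(v, R, D)` (drone speed `v > 1`,
range `R > 0`, finite set `D` of delivery points off the x-axis), any schedule
produced by the greedy algorithm makes at least half as many deliveries as an
optimal (indeed, any) feasible schedule. -/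
theorem greedy_two_approx (v R : ℝ) (D : Finset (ℝ × ℝ)) (hv : 1 < v) (hR : 0 < R)
    (hD : ∀ p ∈ D, p.2 ≠ 0)
    (Lg Lopt : List ((ℝ × ℝ) × ℝ × ℝ))
    (hg : Greedy v R D Lg 0) (hopt : Feasible v R D Lopt 0) :
    Lopt.length ≤ 2 * Lg.length :=
  greedy_two_approx_aux v R Lg D Lopt 0 hg hopt
end

section
/- Let (s_1,r_1],...,(s_p,r_p] and (s'_1,r'_1],...,(s'_q,r'_q] be two families of pairwise disjoint half-open real intervals. Define a map F on indices k ∈ {1,...,p}: if some r'_ℓ lies in (s_k, r_k], map k to the largest such ℓ; otherwise if there is ℓ with s'_ℓ ≤ s_k and r_k < r'_ℓ ≤ s_{k+1}, map k to that ℓ; otherwise k is unmapped. Then F is injective on its domain. -/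
/-- `ChargeMap s r s' r' p q k ℓ` : index `k` (of the first interval family) is mapped
to index `ℓ` (of the second family) by the charging rule: either `r' ℓ ∈ (s k, r k]`
and `ℓ` is the largest such index, or no `r' ℓ'` lies in `(s k, r k]` and
`s' ℓ ≤ s k` with `r k < r' ℓ ≤ s (k+1)`. -/
def ChargeMap (s r s' r' : ℕ → ℝ) (q : ℕ) (k ℓ : ℕ) : Prop :=
  (r' ℓ ∈ Set.Ioc (s k) (r k) ∧ ∀ ℓ' < q, r' ℓ' ∈ Set.Ioc (s k) (r k) → ℓ' ≤ ℓ) ∨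
  ((∀ ℓ' < q, r' ℓ' ∉ Set.Ioc (s k) (r k)) ∧
    s' ℓ ≤ s k ∧ r k < r' ℓ ∧ r' ℓ ≤ s (k + 1))

/-- Given two families `(s k, r k]`, `k < p` (with `s` also defined at the sentinel
index `p`, `r k ≤ s (k+1)` and `s k < r k` for `k < p`, so the intervals of the first
family are pairwise disjoint and consecutive) and `(s' ℓ, r' ℓ]`, `ℓ < q`, pairwise
disjoint, the charging map is injective on its domain. -/
theorem charge_map_injective (s r s' r' : ℕ → ℝ) (p q : ℕ)
    (hsr : ∀ k < p, s k < r k)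
    (hchain : ∀ k < p, r k ≤ s (k + 1))
    (hdisj : ∀ k < p, ∀ k' < p, k ≠ k' →
      Disjoint (Set.Ioc (s k) (r k)) (Set.Ioc (s k') (r k')))
    (hsr' : ∀ ℓ < q, s' ℓ < r' ℓ)
    (hdisj' : ∀ ℓ < q, ∀ ℓ' < q, ℓ ≠ ℓ' →
      Disjoint (Set.Ioc (s' ℓ) (r' ℓ)) (Set.Ioc (s' ℓ') (r' ℓ')))
    (k₁ k₂ ℓ : ℕ) (hk₁ : k₁ < p) (hk₂ : k₂ < p) (hℓ : ℓ < q)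
    (h₁ : ChargeMap s r s' r' q k₁ ℓ) (h₂ : ChargeMap s r s' r' q k₂ ℓ) :
    k₁ = k₂ := by
  -- monotonicity of s on {0,...,p}
  have smono : ∀ i j : ℕ, i ≤ j → j ≤ p → s i ≤ s j := by
    intro i j hij hjp
    induction j with
    | zero => simp_all
    | succ n ih =>
      rcases Nat.lt_or_ge i (n+1) with h | h
      · have hn : n < p := lt_of_lt_of_le (Nat.lt_succ_self n) hjp
        have := ih (Nat.lt_succ_iff.mp h) (le_of_lt hn)
        exact this.trans ((hsr n hn).le.trans (hchain n hn))
      · have : i = n + 1 := le_antisymm hij h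
        simp [this]
  have key : ∀ a b : ℕ, a < b → b < p → r a ≤ s b := by
    intro a b hab hbp
    exact (hchain a (lt_trans hab hbp)).trans (smono (a+1) b hab (le_of_lt hbp))
  by_contra hne
  rcases h₁ with ⟨h1a, _⟩ | ⟨h1a, _, h1c, h1d⟩ <;>
    rcases h₂ with ⟨h2a, _⟩ | ⟨h2a, _, h2c, h2d⟩
  · exact (hdisj k₁ hk₁ k₂ hk₂ hne).ne_of_mem h1a h2a rfl
  · rcases Nat.lt_or_ge k₁ k₂ with h | h
    · have : r' ℓ ≤ s k₂ := h1a.2.trans (key k₁ k₂ h hk₂)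
      exact absurd h2c (not_lt.mpr (this.trans (hsr k₂ hk₂).le))
    · have h' : k₂ < k₁ := lt_of_le_of_ne h (Ne.symm hne)
      have : r' ℓ ≤ s k₁ := h2d.trans (smono (k₂+1) k₁ h' (le_of_lt hk₁))
      exact absurd h1a.1 (not_lt.mpr this)
  · rcases Nat.lt_or_ge k₂ k₁ with h | h
    · have : r' ℓ ≤ s k₁ := h2a.2.trans (key k₂ k₁ h hk₁)
      exact absurd h1c (not_lt.mpr (this.trans (hsr k₁ hk₁).le))
    · have h' : k₁ < k₂ := lt_of_le_of_ne h hne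
      have : r' ℓ ≤ s k₂ := h1d.trans (smono (k₁+1) k₂ h' (le_of_lt hk₂))
      exact absurd h2a.1 (not_lt.mpr this)
  · rcases Nat.lt_or_ge k₁ k₂ with h | h
    · have : r' ℓ ≤ s k₂ := h1d.trans (smono (k₁+1) k₂ h (le_of_lt hk₂))
      exact absurd h2c (not_lt.mpr (this.trans (hsr k₂ hk₂).le))
    · have h' : k₂ < k₁ := lt_of_le_of_ne h (Ne.symm hne)
      have : r' ℓ ≤ s k₁ := h2d.trans (smono (k₂+1) k₁ h' (le_of_lt hk₁))
      exact absurd h1c (not_lt.mpr (this.trans (hsr k₁ hk₁).le))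
end

section
/- In a proper instance, distinct delivery points have distinct x-coordinates, and if x_i < x_j then either ls(d_i) < es(d_j), or es(d_i) < es(d_j) ≤ ls(d_i) < ls(d_j); i.e., the feasible-start intervals are ordered consistently with the x-coordinates. -/
noncomputable section

/-- Earliest feasible start position for a delivery to `d = (x,y)`. -/
def es (v R : ℝ) (d : ℝ × ℝ) : ℝ :=
  d.1 - R / (2 * v) -
    (R / 2) * Real.sqrt (1 - d.2 ^ 2 / (R / (2 * v) * Real.sqrt (v ^ 2 - 1)) ^ 2)

/-- Latest feasible start position for a delivery to `d = (x,y)`. -/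
def ls (v R : ℝ) (d : ℝ × ℝ) : ℝ :=
  d.1 - R / (2 * v) +
    (R / 2) * Real.sqrt (1 - d.2 ^ 2 / (R / (2 * v) * Real.sqrt (v ^ 2 - 1)) ^ 2)

/-- Latest return position from a delivery to `d`. -/
def lr (v R : ℝ) (d : ℝ × ℝ) : ℝ := ls v R d + R / v

/-- A finite set of delivery points is a proper instance if (a) no delivery point
lies in the triangle `(es dᵢ, 0), dᵢ, (lr dᵢ, 0)` of another point and (b) no
feasible-start interval `[es dᵢ, ls dᵢ]` is contained in another's. -/
def Proper (v R : ℝ) (D : Finset (ℝ × ℝ)) : Prop :=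
  (∀ di ∈ D, ∀ dj ∈ D, di ≠ dj →
    dj ∉ convexHull ℝ ({((es v R di, 0) : ℝ × ℝ), di, ((lr v R di, 0) : ℝ × ℝ)} : Set (ℝ × ℝ))) ∧
  (∀ di ∈ D, ∀ dj ∈ D, di ≠ dj →
    ¬ Set.Icc (es v R di) (ls v R di) ⊆ Set.Icc (es v R dj) (ls v R dj))

/-- In a proper instance, distinct delivery points have distinct x-coordinates, and
if `xᵢ < xⱼ` then either `ls dᵢ < es dⱼ` or
`es dᵢ < es dⱼ ≤ ls dᵢ < ls dⱼ`. -/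
theorem proper_interval_order (v R : ℝ) (D : Finset (ℝ × ℝ)) (hv : 1 < v)
    (hR : 0 < R)
    (hband : ∀ d ∈ D, d.2 ≠ 0 ∧ |d.2| ≤ R / (2 * v) * Real.sqrt (v ^ 2 - 1))
    (hprop : Proper v R D) :
    (∀ di ∈ D, ∀ dj ∈ D, di ≠ dj → di.1 ≠ dj.1) ∧
    (∀ di ∈ D, ∀ dj ∈ D, di.1 < dj.1 →
      ls v R di < es v R dj ∨
        (es v R di < es v R dj ∧ es v R dj ≤ ls v R di ∧ ls v R di < ls v R dj)) := by
  have hv0 : v ≠ 0 := by linarith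
  have key : ∀ d : ℝ × ℝ, es v R d + ls v R d = 2 * d.1 - R / v := by
    intro d
    unfold es ls
    field_simp
    ring
  constructor
  · intro di hi dj hj hne heq
    have h1 := hprop.2 di hi dj hj hne
    have h2 := hprop.2 dj hj di hi hne.symm
    have hsum : es v R di + ls v R di = es v R dj + ls v R dj := by
      rw [key, key, heq]
    rcases le_total (es v R dj) (es v R di) with h | h
    · exact h1 (Set.Icc_subset_Icc h (by linarith))
    · exact h2 (Set.Icc_subset_Icc h (by linarith))
  · intro di hi dj hj hlt
    have hne : di ≠ dj := fun h => by rw [h] at hlt; exact lt_irrefl _ hlt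
    have h1 := hprop.2 di hi dj hj hne
    have h2 := hprop.2 dj hj di hi hne.symm
    have hsum : es v R di + ls v R di < es v R dj + ls v R dj := by
      rw [key, key]; linarith
    by_cases hc : ls v R di < es v R dj
    · exact Or.inl hc
    · right
      push_neg at hc
      have he : es v R di < es v R dj := by
        by_contra h; push_neg at h
        exact h1 (Set.Icc_subset_Icc h (by linarith))
      have hl : ls v R di < ls v R dj := by
        by_contra h; push_neg at h
        exact h2 (Set.Icc_subset_Icc (by linarith) h)
      exact ⟨he, hc, hl⟩

end
end
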